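/- The quadratic form Q(ξ) = ξ₁₁² + ξ₂₂² + ξ₃₃² − 2ξ₁₁ξ₂₂ − 2ξ₂₂ξ₃₃ − 2ξ₃₃ξ₁₁ + ξ₁₂² + ξ₂₃² + ξ₃₁² on 3×3 real matrices is not polyconvex: there do not exist real coefficients α_{ij} (1 ≤ i, j ≤ 3) such that Q(η) ≥ Σ_{i,j} α_{ij} M_{ij}(η) for all η ∈ ℝ^{3×3}. -/
import Mathlib


/-- The quadratic form
`Q(ξ) = ξ₁₁² + ξ₂₂² + ξ₃₃² − 2ξ₁₁ξ₂₂ − 2ξ₂₂ξ₃₃ − 2ξ₃₃ξ₁₁ + ξ₁₂² + ξ₂₃² + ξ₃₁²`. -/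
def Q (ξ : Matrix (Fin 3) (Fin 3) ℝ) : ℝ :=
  ξ 0 0 ^ 2 + ξ 1 1 ^ 2 + ξ 2 2 ^ 2
    - 2 * ξ 0 0 * ξ 1 1 - 2 * ξ 1 1 * ξ 2 2 - 2 * ξ 2 2 * ξ 0 0
    + ξ 0 1 ^ 2 + ξ 1 2 ^ 2 + ξ 2 0 ^ 2

/-- The 2×2 minor of a 3×3 matrix obtained by deleting row `i` and column `j`
(with rows and columns of the submatrix taken in cyclic order). -/
def minor (i j : Fin 3) (η : Matrix (Fin 3) (Fin 3) ℝ) : ℝ :=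
  η (i + 1) (j + 1) * η (i + 2) (j + 2) - η (i + 1) (j + 2) * η (i + 2) (j + 1)

private lemma key {a : ℝ} (h : ∀ t : ℝ, a * t ≤ 1) : a = 0 := by
  by_contra ha
  have := h (2 / a)
  rw [mul_div_cancel₀ _ ha] at this
  linarith

/-- `Q` is not polyconvex: there are no real coefficients `α i j` with
`Q(η) ≥ Σ_{i,j} α i j * M i j (η)` for all `η`. -/
theorem Q_not_polyconvex :
    ¬ ∃ α : Fin 3 → Fin 3 → ℝ,
        ∀ η : Matrix (Fin 3) (Fin 3) ℝ,
          ∑ i : Fin 3, ∑ j : Fin 3, α i j * minor i j η ≤ Q η := by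
  rintro ⟨α, h⟩
  have h00 : α 0 0 = 0 := key fun t => by
    have := h !![0,0,0; 0,0,1; 0,-t,0]
    simp [Q, minor, Fin.sum_univ_succ, Matrix.vecHead, Matrix.vecTail] at this
    linarith
  have h01 : α 0 1 = 0 := key fun t => by
    have := h !![0,0,0; -t,0,0; 0,0,1]
    simp [Q, minor, Fin.sum_univ_succ, Matrix.vecHead, Matrix.vecTail] at this
    linarith
  have h02 : α 0 2 = 0 := key fun t => by
    have := h !![0,0,0; t,0,0; 0,1,0]
    simp [Q, minor, Fin.sum_univ_succ, Matrix.vecHead, Matrix.vecTail] at this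
    linarith
  have h10 : α 1 0 = 0 := key fun t => by
    have := h !![0,0,1; 0,0,0; 0,t,0]
    simp [Q, minor, Fin.sum_univ_succ, Matrix.vecHead, Matrix.vecTail] at this
    linarith
  have h11 : α 1 1 = 0 := key fun t => by
    have := h !![0,0,-t; 0,0,0; 1,0,0]
    simp [Q, minor, Fin.sum_univ_succ, Matrix.vecHead, Matrix.vecTail] at this
    linarith
  have h12 : α 1 2 = 0 := key fun t => by
    have := h !![1,0,0; 0,0,0; 0,-t,0]
    simp [Q, minor, Fin.sum_univ_succ, Matrix.vecHead, Matrix.vecTail] at this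
    linarith
  have h20 : α 2 0 = 0 := key fun t => by
    have := h !![0,0,-t; 0,1,0; 0,0,0]
    simp [Q, minor, Fin.sum_univ_succ, Matrix.vecHead, Matrix.vecTail] at this
    linarith
  have h21 : α 2 1 = 0 := key fun t => by
    have := h !![0,0,t; 1,0,0; 0,0,0]
    simp [Q, minor, Fin.sum_univ_succ, Matrix.vecHead, Matrix.vecTail] at this
    linarith
  have h22 : α 2 2 = 0 := key fun t => by
    have := h !![0,1,0; -t,0,0; 0,0,0]
    simp [Q, minor, Fin.sum_univ_succ, Matrix.vecHead, Matrix.vecTail] at this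
    linarith
  have := h !![1,0,0; 0,1,0; 0,0,1]
  simp [Q, minor, Fin.sum_univ_succ, Matrix.vecHead, Matrix.vecTail,
    h00, h01, h02, h10, h11, h12, h20, h21, h22] at this
  linarith
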